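/- arXiv:2102.02099 — 3 statements merged into one kernel-verified Lean document; each statement's English description precedes it below -/
import Mathlib

section
/- Let σx², σv², σw² > 0, A ∈ ℝ, and set K = (Aσw² + σv²)σx² / ((A²σw² + σv²)σx² + σw²σv²), α = Aσw²/(Aσw² + σv²) (assume Aσw² + σv² ≠ 0). Then substituting t = αK and u = (1−α)K into J(t,u) = (At+u−1)²σx² + t²σv² + u²σw² yields exactly J = σx²σw²σv² / ((A²σw²+σv²)σx² + σw²σv²). -/
theorem optimal_decoder_attains (A sx sv sw : ℝ) (hsx : 0 < sx) (hsv : 0 < sv) (hsw : 0 < sw)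
    (hA : A * sw + sv ≠ 0) :
    let K := (A * sw + sv) * sx / ((A ^ 2 * sw + sv) * sx + sw * sv)
    let α := A * sw / (A * sw + sv)
    (A * (α * K) + (1 - α) * K - 1) ^ 2 * sx + (α * K) ^ 2 * sv + ((1 - α) * K) ^ 2 * sw
      = sx * sw * sv / ((A ^ 2 * sw + sv) * sx + sw * sv) := by
  intro K α
  set D := (A ^ 2 * sw + sv) * sx + sw * sv
  have hD : D ≠ 0 := by positivity
  -- The factor `A * sw + sv` of `K` cancels against the denominator of `α`.
  have ht : α * K = A * sw * sx / D := by
    simp only [α, K]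
    field_simp
    ring
  have hu : (1 - α) * K = sv * sx / D := by
    simp only [α, K]
    field_simp
    ring
  rw [ht, hu]
  field_simp
  ring
end

section
/- Let σx², σv², σw², θ > 0 with θ < σx²/(σv²(σx²/σw²+1)²). Define A² = √((1/θ)·σv²/σx²) − σv²/σw² − σv²/σx². Then A² > 0, and A² satisfies the fixed-point equation θ·(A²σw² + σv² + σw²σv²/σx²)² = σw⁴σv²/σx². -/
theorem nash_coefficient_fixed_point (sx sv sw θ : ℝ) (hsx : 0 < sx) (hsv : 0 < sv)
    (hsw : 0 < sw) (hθ0 : 0 < θ) (hθ : θ < sx / (sv * (sx / sw + 1) ^ 2)) :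
    let A2 := Real.sqrt ((1 / θ) * (sv / sx)) - sv / sw - sv / sx
    0 < A2 ∧ θ * (A2 * sw + sv + sw * sv / sx) ^ 2 = sw ^ 2 * sv / sx := by
  intro A2
  have hq : (0:ℝ) ≤ (1 / θ) * (sv / sx) := by positivity
  have hsq : Real.sqrt ((1 / θ) * (sv / sx)) ^ 2 = (1 / θ) * (sv / sx) :=
    Real.sq_sqrt hq
  have hden : 0 < sv * (sx / sw + 1) ^ 2 := by positivity
  have hθ' : θ * (sv * (sx / sw + 1) ^ 2) < sx := (lt_div_iff₀ hden).mp hθ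
  have hpos : sv / sw + sv / sx < Real.sqrt ((1 / θ) * (sv / sx)) := by
    rw [show sv / sw + sv / sx = sv / sx * (sx / sw + 1) by field_simp]
    rw [Real.lt_sqrt (by positivity)]
    rw [show (1 / θ) * (sv / sx) = (sv / sx) / θ by ring, lt_div_iff₀ hθ0]
    have h := mul_lt_mul_of_pos_left hθ' (by positivity : 0 < sv / sx ^ 2)
    calc (sv / sx * (sx / sw + 1)) ^ 2 * θ
        = sv / sx ^ 2 * (θ * (sv * (sx / sw + 1) ^ 2)) := by ring
      _ < sv / sx ^ 2 * sx := h
      _ = sv / sx := by field_simp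
  constructor
  · simp only [A2]; linarith
  · have hA : A2 * sw + sv + sw * sv / sx = Real.sqrt ((1 / θ) * (sv / sx)) * sw := by
      simp only [A2]; field_simp; ring
    rw [hA, mul_pow, hsq]
    field_simp
end

section
/- Let Σ, σv², σw², θ > 0. Define g(μ) = Σσw²σv²/((μσw² + σv²)Σ + σw²σv²) + θμΣ for μ ≥ 0. If θ ≥ Σ/(σv²(Σ/σw² + 1)²) then g is minimized over [0,∞) at μ* = 0; if θ < Σ/(σv²(Σ/σw² + 1)²) then g is minimized at μ* = σv²/√(θΣσv²) − (σv²/Σ)(Σ/σw² + 1) > 0. -/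
/-!
In the variable `s = (μ σw² + σv²) Σ + σw² σv²`, which ranges over `[c, ∞)` with `c = σv² (Σ + σw²)`,
the objective is `K / s + λ s − λ c` with `K = Σ σw² σv²` and `λ = θ / σw²`. On `s > 0` the map
`s ↦ K / s + λ s` decreases up to `√(K / λ)` and increases after it, so it is minimised over `[c, ∞)`
at `s = c` (that is `μ = 0`) when `K ≤ λ c²`, and otherwise at the interior point `s = √(K / λ)`,
which is the stated `μ*`.
-/

theorem div_add_mul_le_of_le_mul_sq {K l c s : ℝ} (hK : 0 ≤ K) (hc : 0 < c) (hcs : c ≤ s)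
    (h : K ≤ l * c ^ 2) : K / c + l * c ≤ K / s + l * s := by
  have hs : 0 < s := hc.trans_le hcs
  have hKcs : K / (c * s) ≤ l := calc
    K / (c * s) ≤ K / c ^ 2 := by rw [sq]; gcongr
    _ ≤ l := (div_le_iff₀ (by positivity)).mpr h
  have key : K / s + l * s - (K / c + l * c) = (s - c) * (l - K / (c * s)) := by
    field_simp
    ring
  rw [← sub_nonneg, key]
  exact mul_nonneg (sub_nonneg.mpr hcs) (sub_nonneg.mpr hKcs)

theorem div_add_mul_le_of_mul_sq_eq {K l t s : ℝ} (hl : 0 ≤ l) (hs : 0 < s)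
    (h : l * t ^ 2 = K) : K / t + l * t ≤ K / s + l * s := by
  have key : K / s + l * s - (K / t + l * t) = l * (s - t) ^ 2 / s := by
    subst h
    field_simp
    ring
  rw [← sub_nonneg, key]
  positivity

section StagewiseObjective

variable {Sig sv sw θ : ℝ}

def encoderDenom (Sig sv sw μ : ℝ) : ℝ := (μ * sw + sv) * Sig + sw * sv

noncomputable def encoderObjective (Sig sv sw θ μ : ℝ) : ℝ :=
  Sig * sw * sv / encoderDenom Sig sv sw μ + θ * μ * Sig

theorem encoderObjective_eq (hsw : sw ≠ 0) (μ : ℝ) :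
    encoderObjective Sig sv sw θ μ =
      Sig * sw * sv / encoderDenom Sig sv sw μ + θ / sw * encoderDenom Sig sv sw μ
        - θ / sw * (sv * (Sig + sw)) := by
  have linear_part : θ * μ * Sig =
      θ / sw * encoderDenom Sig sv sw μ - θ / sw * (sv * (Sig + sw)) := by
    rw [encoderDenom]
    field_simp
    ring
  rw [encoderObjective, linear_part, add_sub_assoc]

theorem encoderDenom_eq (μ : ℝ) :
    encoderDenom Sig sv sw μ = μ * (sw * Sig) + sv * (Sig + sw) := by
  rw [encoderDenom]
  ring

theorem le_encoderDenom (hSig : 0 < Sig) (hsw : 0 < sw) {μ : ℝ} (hμ : 0 ≤ μ) :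
    sv * (Sig + sw) ≤ encoderDenom Sig sv sw μ := by
  rw [encoderDenom_eq]
  have : 0 ≤ μ * (sw * Sig) := by positivity
  linarith

theorem threshold_le_iff (hSig : 0 < Sig) (hsv : 0 < sv) (hsw : 0 < sw) :
    Sig / (sv * (Sig / sw + 1) ^ 2) ≤ θ ↔ Sig * sw * sv ≤ θ / sw * (sv * (Sig + sw)) ^ 2 := by
  have hthr : Sig / (sv * (Sig / sw + 1) ^ 2) = Sig * sw * sv / ((sv * (Sig + sw)) ^ 2 / sw) := by
    field_simp
  rw [hthr, div_le_iff₀ (by positivity), mul_div_assoc', div_mul_eq_mul_div]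

theorem encoderDenom_optimum (hSig : 0 < Sig) (hsv : 0 < sv) (hsw : 0 < sw) (hθ : 0 < θ) :
    encoderDenom Sig sv sw (sv / √(θ * Sig * sv) - sv / Sig * (Sig / sw + 1))
      = sv * sw * Sig / √(θ * Sig * sv) := by
  have hr : 0 < √(θ * Sig * sv) := by positivity
  rw [encoderDenom]
  field_simp
  ring

theorem mul_encoderDenom_optimum_sq (hSig : 0 < Sig) (hsv : 0 < sv) (hsw : 0 < sw) (hθ : 0 < θ) :
    θ / sw * (sv * sw * Sig / √(θ * Sig * sv)) ^ 2 = Sig * sw * sv := by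
  rw [div_pow, Real.sq_sqrt (by positivity)]
  field_simp

end StagewiseObjective

theorem stagewise_encoder_optimum (Sig sv sw θ : ℝ) (hSig : 0 < Sig) (hsv : 0 < sv) (hsw : 0 < sw)
    (hθ : 0 < θ) :
    (θ ≥ Sig / (sv * (Sig / sw + 1) ^ 2) →
      ∀ μ : ℝ, 0 ≤ μ →
        Sig * sw * sv / ((0 * sw + sv) * Sig + sw * sv) + θ * 0 * Sig
          ≤ Sig * sw * sv / ((μ * sw + sv) * Sig + sw * sv) + θ * μ * Sig) ∧
    (θ < Sig / (sv * (Sig / sw + 1) ^ 2) →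
      0 < sv / Real.sqrt (θ * Sig * sv) - (sv / Sig) * (Sig / sw + 1) ∧
      ∀ μ : ℝ, 0 ≤ μ →
        Sig * sw * sv /
            (((sv / Real.sqrt (θ * Sig * sv) - (sv / Sig) * (Sig / sw + 1)) * sw + sv) * Sig + sw * sv)
            + θ * (sv / Real.sqrt (θ * Sig * sv) - (sv / Sig) * (Sig / sw + 1)) * Sig
          ≤ Sig * sw * sv / ((μ * sw + sv) * Sig + sw * sv) + θ * μ * Sig) := by
  set a := sv / √(θ * Sig * sv) - sv / Sig * (Sig / sw + 1)
  set K := Sig * sw * sv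
  set c := sv * (Sig + sw)
  have hK : 0 < K := by positivity
  have hc : 0 < c := by positivity
  have hl : 0 < θ / sw := by positivity
  refine ⟨fun hge μ hμ => ?_, fun hlt => ?_⟩
  · have hKc : K ≤ θ / sw * c ^ 2 := (threshold_le_iff hSig hsv hsw).mp hge
    change encoderObjective Sig sv sw θ 0 ≤ encoderObjective Sig sv sw θ μ
    rw [encoderObjective_eq hsw.ne', encoderObjective_eq hsw.ne', encoderDenom_eq 0, zero_mul,
      zero_add]
    exact sub_le_sub_right
      (div_add_mul_le_of_le_mul_sq hK.le hc (le_encoderDenom hSig hsw hμ) hKc) _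
  · have hKc : θ / sw * c ^ 2 < K := not_le.mp ((threshold_le_iff hSig hsv hsw).not.mp hlt.not_ge)
    have hdenom := encoderDenom_optimum hSig hsv hsw hθ
    have hKt := mul_encoderDenom_optimum_sq hSig hsv hsw hθ
    set t := sv * sw * Sig / √(θ * Sig * sv)
    have hct : c < t := by
      have : c ^ 2 < t ^ 2 := lt_of_mul_lt_mul_left (hKc.trans_eq hKt.symm) hl.le
      exact lt_of_pow_lt_pow_left₀ 2 (by positivity) this
    have ha : 0 < a := by
      have : 0 < a * (sw * Sig) := by linarith [encoderDenom_eq (Sig := Sig) (sv := sv) (sw := sw) a]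
      exact pos_of_mul_pos_left this (by positivity)
    refine ⟨ha, fun μ hμ => ?_⟩
    change encoderObjective Sig sv sw θ a ≤ encoderObjective Sig sv sw θ μ
    rw [encoderObjective_eq hsw.ne', encoderObjective_eq hsw.ne', hdenom]
    exact sub_le_sub_right (div_add_mul_le_of_mul_sq_eq hl.le
      (hc.trans_le (le_encoderDenom hSig hsw hμ)) hKt) _
end
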